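/- arXiv:1901.00264 — 2 statements merged into one kernel-verified Lean document; each statement's English description precedes it below -/
import Mathlib

section
/- Let a, b ≥ 2 be coprime natural numbers, let p be a prime, and let i ≥ 1. Then the sum over the finite set of natural numbers m ≥ 1 with ℓ(a,b,m) < i of the p-adic valuation ν_p(m) equals ν_p((a·b·i)!) − ν_p(M_i), where M_i denotes the product of all natural numbers m with 1 ≤ m ≤ a·b·i and ℓ(a,b,m) = i. -/
/-!
If `m ≤ a * b * i`, the second coordinates `y` of the representations `m = a * x + b * y` lie in a
single residue class mod `a` (as `a` and `b` are coprime) and below `a * i`, so `ℓ(m) ≤ i`. If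
`m > a * b * i`, then `m - a * b * (i - 1) > a * b` has a positive representation (Sylvester), and
shifting it by multiples of `(b, -a)` gives `i` representations of `m`, so `ℓ(m) ≥ i`. Hence
`{m ≥ 1 | ℓ(m) < i}` lies in `[1, a * b * i]`, which it splits with `{ℓ = i}`; now take `ν_p` of
`(a * b * i)! = ∏_{m ∈ [1, a * b * i]} m`.
-/

/-- `ell a b m` is the number of pairs `(i, j)` of positive integers with `m = a * i + b * j`. -/
noncomputable def ell (a b m : ℕ) : ℕ :=
  {p : ℕ × ℕ | 0 < p.1 ∧ 0 < p.2 ∧ m = a * p.1 + b * p.2}.ncard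

theorem padicValNat_finset_prod {ι : Type*} {p : ℕ} (hp : p.Prime) {s : Finset ι} {f : ι → ℕ}
    (hf : ∀ i ∈ s, f i ≠ 0) :
    padicValNat p (∏ i ∈ s, f i) = ∑ i ∈ s, padicValNat p (f i) := by
  simp_rw [← Nat.factorization_def _ hp, Nat.factorization_prod hf, Finsupp.finsetSum_apply]

theorem padicValNat_factorial_eq_sum_Icc {p : ℕ} (hp : p.Prime) (n : ℕ) :
    padicValNat p n.factorial = ∑ m ∈ Finset.Icc 1 n, padicValNat p m := by
  rw [← Finset.prod_Ico_id_eq_factorial, Finset.Ico_add_one_right_eq_Icc]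
  exact padicValNat_finset_prod hp fun m hm => by grind

namespace Nat

variable {a b : ℕ}

theorem eq_of_mul_add_mul_eq_of_div_eq (ha : 0 < a) (hab : a.Coprime b) {x y x' y' : ℕ}
    (h : a * x + b * y = a * x' + b * y') (hy : y / a = y' / a) : x = x' ∧ y = y' := by
  have hmod : b * y ≡ b * y' [MOD a] := by
    simpa only [ModEq, mul_add_mod] using congrArg (· % a) h
  have hyy : y = y' := by
    rw [← div_add_mod y a, ← div_add_mod y' a, hy, ModEq.cancel_left_of_coprime hab hmod]
  subst hyy
  exact ⟨Nat.eq_of_mul_eq_mul_left ha (by omega), rfl⟩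

theorem exists_pos_mul_add_mul_eq (ha : 0 < a) (hb : 0 < b) (hab : a.Coprime b) {m : ℕ}
    (hm : a * b < m) : ∃ x y, 0 < x ∧ 0 < y ∧ m = a * x + b * y := by
  obtain ⟨x, y, hxy⟩ := exists_add_mul_eq_of_gcd_dvd_of_mul_pred_le a b (m - a - b)
    (by simp [hab.gcd_eq_one]) (by
      obtain ⟨a, rfl⟩ := exists_eq_add_one_of_ne_zero ha.ne'
      obtain ⟨b, rfl⟩ := exists_eq_add_one_of_ne_zero hb.ne'
      simp only [pred_eq_sub_one, add_tsub_cancel_right]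
      ring_nf at hm ⊢
      omega)
  have : a + b ≤ m := by nlinarith
  exact ⟨x + 1, y + 1, x.succ_pos, y.succ_pos, by grind⟩

end Nat

section ell

variable {a b : ℕ}

theorem ell_le_of_le_mul (ha : 0 < a) (hab : a.Coprime b) {m i : ℕ} (hm : m ≤ a * b * i) :
    ell a b m ≤ i := by
  rw [ell, ← Set.ncard_Iio_nat i]
  refine Set.ncard_le_ncard_of_injOn (fun q => q.2 / a) ?_ ?_ (Set.finite_Iio i)
  · rintro ⟨x, y⟩ ⟨hx, -, rfl⟩
    rw [Set.mem_Iio, Nat.div_lt_iff_lt_mul ha]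
    have : b * y < b * (i * a) := by nlinarith
    exact Nat.lt_of_mul_lt_mul_left this
  · rintro ⟨x, y⟩ ⟨-, -, rfl⟩ ⟨x', y'⟩ ⟨-, -, h⟩ hy
    obtain ⟨rfl, rfl⟩ := Nat.eq_of_mul_add_mul_eq_of_div_eq ha hab h hy
    rfl

theorem le_ell_of_mul_lt (ha : 0 < a) (hb : 0 < b) (hab : a.Coprime b) {m i : ℕ}
    (hm : a * b * i < m) : i ≤ ell a b m := by
  obtain _ | i := i
  · exact Nat.zero_le _
  rw [mul_add_one] at hm
  obtain ⟨x, y, hx, hy, hxy⟩ := Nat.exists_pos_mul_add_mul_eq ha hb hab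
    (show a * b < m - a * b * i by omega)
  have hfin : {q : ℕ × ℕ | 0 < q.1 ∧ 0 < q.2 ∧ m = a * q.1 + b * q.2}.Finite :=
    ((Set.finite_Iic m).prod (Set.finite_Iic m)).subset fun q ⟨hq1, hq2, hq⟩ => by
      constructor <;> simp only [Set.mem_Iic] <;> nlinarith
  rw [ell, ← Finset.Nat.card_antidiagonal i, ← Set.ncard_coe_finset]
  refine Set.ncard_le_ncard_of_injOn (fun st => (x + b * st.1, y + a * st.2)) ?_ ?_ hfin
  · rintro ⟨s, t⟩ hst
    rw [Finset.mem_coe, Finset.HasAntidiagonal.mem_antidiagonal] at hst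
    refine ⟨by omega, by omega, ?_⟩
    rw [Nat.sub_eq_iff_eq_add (by omega), ← hst] at hxy
    rw [hxy]
    ring
  · rintro ⟨s, t⟩ - ⟨s', t'⟩ - h
    simp only [Prod.mk.injEq, Nat.add_left_cancel_iff] at h
    rw [Nat.eq_of_mul_eq_mul_left hb h.1, Nat.eq_of_mul_eq_mul_left ha h.2]

end ell

theorem sum_padicValNat_ell_lt_general (a b : ℕ) (ha : 2 ≤ a) (hb : 2 ≤ b)
    (hab : Nat.gcd a b = 1) (p : ℕ) (hp : p.Prime) (i : ℕ)
    (hfin : {m : ℕ | 1 ≤ m ∧ ell a b m < i}.Finite) :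
    ∑ m ∈ hfin.toFinset, padicValNat p m =
      padicValNat p (Nat.factorial (a * b * i)) -
        padicValNat p
          (∏ m ∈ (Finset.Icc 1 (a * b * i)).filter (fun m => ell a b m = i), m) := by
  have ha₀ : 0 < a := by omega
  have hb₀ : 0 < b := by omega
  set N := a * b * i
  have hlt : hfin.toFinset = (Finset.Icc 1 N).filter (ell a b · < i) := by
    ext m
    simp only [Set.Finite.mem_toFinset, Set.mem_ofPred_eq, Finset.mem_filter, Finset.mem_Icc]
    refine ⟨fun ⟨h1, h2⟩ => ⟨⟨h1, ?_⟩, h2⟩, fun ⟨⟨h1, _⟩, h2⟩ => ⟨h1, h2⟩⟩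
    by_contra! hm
    exact (le_ell_of_mul_lt ha₀ hb₀ hab hm).not_gt h2
  have heq : (Finset.Icc 1 N).filter (¬ ell a b · < i) =
      (Finset.Icc 1 N).filter (ell a b · = i) :=
    Finset.filter_congr fun m hm => by
      have := ell_le_of_le_mul ha₀ hab (Finset.mem_Icc.mp hm).2
      omega
  rw [hlt, padicValNat_factorial_eq_sum_Icc hp, padicValNat_finset_prod hp (by grind), ← heq,
    ← Finset.sum_filter_add_sum_filter_not (Finset.Icc 1 N) (ell a b · < i), Nat.add_sub_cancel]

theorem sum_padicValNat_ell_lt (a b : ℕ) (ha : 2 ≤ a) (hb : 2 ≤ b)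
    (hab : Nat.gcd a b = 1) (p : ℕ) (hp : p.Prime) (i : ℕ) (hi : 1 ≤ i)
    (hfin : {m : ℕ | 1 ≤ m ∧ ell a b m < i}.Finite) :
    ∑ m ∈ hfin.toFinset, padicValNat p m =
      padicValNat p (Nat.factorial (a * b * i)) -
        padicValNat p
          (∏ m ∈ (Finset.Icc 1 (a * b * i)).filter (fun m => ell a b m = i), m) :=
  sum_padicValNat_ell_lt_general a b ha hb hab p hp i hfin
end

section
/- Let a, b ≥ 2 be coprime natural numbers, let p be a prime, and let i ≥ 1. Then the sum over the finite set of natural numbers m ≥ 1 with ℓ(a,b,m) < i of the p-adic valuation ν_p(i − ℓ(a,b,m)) equals a·b·ν_p(i!) − ((a−1)(b−1)/2)·ν_p(i). (Here (a−1)(b−1) is even since a and b are coprime.) -/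
open Finset
open scoped Nat

namespace Nat

theorem eq_of_mul_modEq_of_mem_Icc {a b x y : ℕ} (hab : a.Coprime b) (hx : x ∈ Icc 1 b)
    (hy : y ∈ Icc 1 b) (h : a * x ≡ a * y [MOD b]) : x = y := by
  rw [mem_Icc] at hx hy
  have hxy : x - 1 + 1 ≡ y - 1 + 1 [MOD b] := by
    rw [Nat.sub_add_cancel hx.1, Nat.sub_add_cancel hy.1]
    exact h.cancel_left_of_coprime (Nat.coprime_comm.mp hab)
  have := (Nat.ModEq.add_right_cancel' 1 hxy).eq_of_lt_of_lt (by omega) (by omega)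
  omega

theorem exists_mem_Icc_mul_modEq {a b : ℕ} (hab : a.Coprime b) (hb : 0 < b) (m : ℕ) :
    ∃ x ∈ Icc 1 b, a * x ≡ m [MOD b] := by
  have : NeZero b := ⟨hb.ne'⟩
  set z : ZMod b := m * (a : ZMod b)⁻¹
  refine ⟨(z - 1).val + 1, mem_Icc.2 ⟨by omega, (z - 1).val_lt⟩, ?_⟩
  rw [← ZMod.natCast_eq_natCast_iff]
  push_cast
  rw [ZMod.natCast_zmod_val, sub_add_cancel, mul_left_comm, ZMod.coe_mul_inv_eq_one a hab,
    mul_one]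

theorem mul_add_mul_ne_mul {a b x y : ℕ} (hab : a.Coprime b) (hx : 0 < x) (hxb : x < b) :
    a * x + b * y ≠ a * b := by
  intro h
  have hdvd : b ∣ a * x := (Nat.dvd_add_left (dvd_mul_right b y)).mp (h ▸ dvd_mul_left b a)
  exact absurd (Nat.le_of_dvd hx (hab.symm.dvd_of_dvd_mul_left hdvd)) (by omega)

end Nat

def positiveReprs (a b m : ℕ) : Set (ℕ × ℕ) :=
  {p | 0 < p.1 ∧ 0 < p.2 ∧ m = a * p.1 + b * p.2}

theorem ell_eq_ncard (a b m : ℕ) : ell a b m = (positiveReprs a b m).ncard := rfl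

namespace positiveReprs

variable {a b : ℕ}

@[simp]
theorem mem_iff {m : ℕ} {p : ℕ × ℕ} :
    p ∈ positiveReprs a b m ↔ 0 < p.1 ∧ 0 < p.2 ∧ m = a * p.1 + b * p.2 := Iff.rfl

theorem finite (ha : 0 < a) (hb : 0 < b) (m : ℕ) : (positiveReprs a b m).Finite :=
  ((Set.finite_Iic m).prod (Set.finite_Iic m)).subset fun p ⟨_, _, hp⟩ => by
    simp only [Set.mem_prod, Set.mem_Iic]
    constructor <;> nlinarith

theorem subsingleton_fst_le (hab : a.Coprime b) (m : ℕ) :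
    {p ∈ positiveReprs a b m | p.1 ≤ b}.Subsingleton := by
  rintro p ⟨⟨hp1, hp2, hpm⟩, hpb⟩ q ⟨⟨hq1, hq2, hqm⟩, hqb⟩
  have hmod : a * p.1 ≡ a * q.1 [MOD b] := by
    rw [Nat.ModEq, ← Nat.add_mul_mod_self_left (a * p.1) b p.2, ← hpm,
      ← Nat.add_mul_mod_self_left (a * q.1) b q.2, ← hqm]
  have h1 := Nat.eq_of_mul_modEq_of_mem_Icc hab (mem_Icc.2 ⟨hp1, hpb⟩) (mem_Icc.2 ⟨hq1, hqb⟩) hmod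
  have h2 : b * p.2 = b * q.2 := by rw [h1] at hpm; omega
  exact Prod.ext h1 (Nat.eq_of_mul_eq_mul_left (by omega) h2)

end positiveReprs

section ell

variable {a b : ℕ}

theorem ell_add_mul_self (ha : 0 < a) (hb : 0 < b) (hab : a.Coprime b) {m : ℕ} (hm : 0 < m) :
    ell a b (m + a * b) = ell a b m + 1 := by
  set S := positiveReprs a b (m + a * b)
  have hsplit : S = (fun p => (p.1 + b, p.2)) '' positiveReprs a b m ∪ {p ∈ S | p.1 ≤ b} := by
    ext ⟨x, y⟩
    simp only [S, Set.mem_union, Set.mem_image, Set.mem_ofPred_eq, positiveReprs.mem_iff,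
      Prod.mk.injEq, Prod.exists]
    constructor
    · rintro ⟨hx, hy, h⟩
      rcases le_or_gt x b with hxb | hbx
      · exact .inr ⟨⟨hx, hy, h⟩, hxb⟩
      · obtain ⟨x', rfl⟩ := Nat.exists_eq_add_of_lt hbx
        refine .inl ⟨x' + 1, y, ⟨by omega, hy, by linarith [mul_add a (x' + 1) b]⟩, by omega, rfl⟩
    · rintro (⟨x', y', ⟨hx', hy', h⟩, rfl, rfl⟩ | ⟨h, -⟩)
      · exact ⟨by omega, hy', by rw [h, mul_add]; ring⟩
      · exact h
  have hlow : ∃ q, {p ∈ S | p.1 ≤ b} = {q} := by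
    obtain ⟨x, hx, hxm⟩ := Nat.exists_mem_Icc_mul_modEq hab hb m
    rw [mem_Icc] at hx
    have hle : a * x ≤ a * b := Nat.mul_le_mul_left a hx.2
    have hmod : a * x ≡ m + a * b [MOD b] := hxm.trans (by simp [Nat.ModEq])
    obtain ⟨y, hy⟩ := (Nat.modEq_iff_dvd' (by omega)).mp hmod
    have hy0 : 0 < y := Nat.pos_of_ne_zero (by rintro rfl; omega)
    exact ⟨(x, y), (positiveReprs.subsingleton_fst_le hab _).eq_singleton_of_mem
      ⟨⟨hx.1, hy0, by dsimp only; omega⟩, hx.2⟩⟩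
  have hdisj : Disjoint ((fun p => (p.1 + b, p.2)) '' positiveReprs a b m) {p ∈ S | p.1 ≤ b} := by
    rw [Set.disjoint_left]
    rintro _ ⟨q, ⟨hq, -⟩, rfl⟩ ⟨-, h⟩
    exact absurd h (by simp only; omega)
  obtain ⟨q, hq⟩ := hlow
  rw [ell_eq_ncard]
  change S.ncard = _
  rw [hsplit, Set.ncard_union_eq hdisj ((positiveReprs.finite ha hb m).image _)
    (hq ▸ Set.finite_singleton q), Set.ncard_image_of_injective _ (fun p q h => by
      simpa [Prod.ext_iff] using h), hq, Set.ncard_singleton, ell_eq_ncard]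

theorem ell_add_mul (ha : 0 < a) (hb : 0 < b) (hab : a.Coprime b) {m : ℕ} (hm : 0 < m) (t : ℕ) :
    ell a b (m + a * b * t) = ell a b m + t := by
  induction t with
  | zero => simp
  | succ t ih =>
    rw [mul_add_one, ← add_assoc, ell_add_mul_self ha hb hab (by omega), ih, add_assoc]

theorem ell_le_one (ha : 0 < a) (hab : a.Coprime b) {m : ℕ} (hm : m ≤ a * b) : ell a b m ≤ 1 := by
  have hsub : positiveReprs a b m ⊆ {p ∈ positiveReprs a b m | p.1 ≤ b} := by
    rintro p ⟨hp1, hp2, rfl⟩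
    exact ⟨⟨hp1, hp2, rfl⟩, Nat.le_of_mul_le_mul_left (by nlinarith) ha⟩
  have hss := (positiveReprs.subsingleton_fst_le hab m).anti hsub
  exact (Set.ncard_le_one hss.finite).2 fun p hp q hq => hss hp hq

theorem two_mul_card_filter_mul_add_mul_le (hab : a.Coprime b) :
    2 * #{p ∈ Ico 1 b ×ˢ Ico 1 a | a * p.1 + b * p.2 ≤ a * b} = (a - 1) * (b - 1) := by
  set B := Ico 1 b ×ˢ Ico 1 a
  have hB : ∀ p ∈ B, 0 < p.1 ∧ p.1 < b ∧ 0 < p.2 ∧ p.2 < a ∧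
      a * (b - p.1) + b * (a - p.2) + (a * p.1 + b * p.2) = 2 * (a * b) ∧
      a * p.1 + b * p.2 ≠ a * b := by
    intro p hp
    simp only [B, mem_product, mem_Ico] at hp
    have h1 : a * (b - p.1) + a * p.1 = a * b := by rw [← mul_add, Nat.sub_add_cancel hp.1.2.le]
    have h2 : b * (a - p.2) + b * p.2 = b * a := by rw [← mul_add, Nat.sub_add_cancel hp.2.2.le]
    refine ⟨by omega, hp.1.2, by omega, hp.2.2, by rw [mul_comm b a] at h2; omega,
      Nat.mul_add_mul_ne_mul hab (by omega) hp.1.2⟩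
  have hrefl : #{p ∈ B | a * p.1 + b * p.2 ≤ a * b} = #{p ∈ B | ¬ a * p.1 + b * p.2 ≤ a * b} := by
    refine card_nbij' (fun p => (b - p.1, a - p.2)) (fun p => (b - p.1, a - p.2)) ?_ ?_ ?_ ?_ <;>
      intro p hp <;> simp only [coe_filter, Set.mem_ofPred_eq] at hp <;>
      have := hB p hp.1
    all_goals simp only [coe_filter, Set.mem_ofPred_eq, B, mem_product, mem_Ico, Prod.ext_iff]
    all_goals omega
  have hcard : #B = (a - 1) * (b - 1) := by simp [B, mul_comm]
  rw [← hcard, ← card_filter_add_card_filter_not (s := B) (fun p => a * p.1 + b * p.2 ≤ a * b),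
    ← hrefl, two_mul]

theorem sum_ell_Icc (ha : 0 < a) (hab : a.Coprime b) :
    ∑ m ∈ Icc 1 (a * b), ell a b m = (a - 1) * (b - 1) / 2 := by
  set T := {p ∈ Ico 1 b ×ˢ Ico 1 a | a * p.1 + b * p.2 ≤ a * b}
  have hfiber : ∀ m ∈ Icc 1 (a * b), ell a b m = #{p ∈ T | a * p.1 + b * p.2 = m} := by
    intro m hm
    rw [mem_Icc] at hm
    rw [ell_eq_ncard, ← Set.ncard_coe_finset]
    congr 1
    ext ⟨x, y⟩
    simp only [T, positiveReprs.mem_iff, coe_filter, mem_filter, mem_product, mem_Ico,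
      Set.mem_ofPred_eq]
    constructor
    · rintro ⟨hx, hy, rfl⟩
      refine ⟨⟨⟨⟨hx, ?_⟩, hy, ?_⟩, hm.2⟩, rfl⟩ <;> by_contra! h <;> nlinarith
    · rintro ⟨⟨⟨⟨hx, -⟩, hy, -⟩, -⟩, rfl⟩
      exact ⟨hx, hy, rfl⟩
  have hmaps : ∀ p ∈ T, a * p.1 + b * p.2 ∈ Icc 1 (a * b) := by
    intro p hp
    simp only [T, mem_filter, mem_product, mem_Ico] at hp
    exact mem_Icc.2 ⟨by nlinarith, hp.2⟩
  have hT : 2 * #T = (a - 1) * (b - 1) := two_mul_card_filter_mul_add_mul_le hab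
  rw [sum_congr rfl hfiber, ← card_eq_sum_card_fiberwise hmaps]
  omega

end ell

theorem sum_eq_sum_Icc_sum_range_of_add_mul {M : Type*} [AddCommMonoid M] {N i : ℕ} (hN : 0 < N)
    {g : ℕ → ℕ} (hg : ∀ m t, 0 < m → g (m + N * t) = g m + t) {F : Finset ℕ}
    (hF : ∀ m, m ∈ F ↔ 1 ≤ m ∧ g m < i) (f : ℕ → M) :
    ∑ m ∈ F, f m = ∑ r ∈ Icc 1 N, ∑ t ∈ range (i - g r), f (r + N * t) := by
  have hdec : ∀ m, 0 < m → (m - 1) % N + 1 + N * ((m - 1) / N) = m := fun m hm => by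
    have := Nat.mod_add_div (m - 1) N
    omega
  rw [sum_sigma']
  refine sum_bij' (fun m _ => ⟨(m - 1) % N + 1, (m - 1) / N⟩) (fun x _ => x.1 + N * x.2)
    ?_ ?_ ?_ ?_ ?_
  · intro m hm
    rw [hF] at hm
    have hgm := hg ((m - 1) % N + 1) ((m - 1) / N) (by omega)
    rw [hdec m hm.1] at hgm
    simp only [mem_sigma, mem_Icc, mem_range]
    exact ⟨⟨by omega, Nat.mod_lt _ hN⟩, by omega⟩
  · rintro ⟨r, t⟩ hrt
    simp only [mem_sigma, mem_Icc, mem_range] at hrt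
    dsimp only
    rw [hF, hg r t (by omega)]
    exact ⟨by omega, by omega⟩
  · intro m hm
    exact hdec m ((hF m).1 hm).1
  · rintro ⟨r, t⟩ hrt
    simp only [mem_sigma, mem_Icc] at hrt
    have hr : r + N * t - 1 = r - 1 + N * t := by omega
    rw [hr, Nat.add_mul_mod_self_left, Nat.mod_eq_of_lt (by omega), Nat.add_mul_div_left _ _ hN,
      Nat.div_eq_of_lt (by omega), Nat.sub_add_cancel hrt.1.1, zero_add]
  · intro m hm
    rw [hdec m ((hF m).1 hm).1]

section padicValNat

variable {p : ℕ} [Fact p.Prime]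

theorem sum_range_padicValNat_sub (n : ℕ) :
    ∑ t ∈ range n, padicValNat p (n - t) = padicValNat p n ! := by
  induction n with
  | zero => simp
  | succ n ih =>
    rw [sum_range_succ', Nat.factorial_succ, padicValNat.mul n.succ_ne_zero n.factorial_ne_zero]
    simp only [Nat.add_sub_add_right, ih, Nat.sub_zero, add_comm]

theorem padicValNat_factorial_sub_add_mul {k : ℕ} (hk : k ≤ 1) (i : ℕ) :
    padicValNat p (i - k)! + k * padicValNat p i = padicValNat p i ! := by
  interval_cases k
  · simp
  · rcases Nat.eq_zero_or_pos i with rfl | hi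
    · simp
    · rw [← Nat.mul_factorial_pred hi.ne', padicValNat.mul hi.ne' (Nat.factorial_ne_zero _)]
      omega

end padicValNat

theorem sum_padicValNat_sub_ell_general (a b : ℕ) (ha : 2 ≤ a) (hb : 2 ≤ b)
    (hab : Nat.gcd a b = 1) (p : ℕ) (hp : p.Prime) (i : ℕ)
    (hfin : {m : ℕ | 1 ≤ m ∧ ell a b m < i}.Finite) :
    ∑ m ∈ hfin.toFinset, padicValNat p (i - ell a b m) =
      a * b * padicValNat p (Nat.factorial i) -
        (a - 1) * (b - 1) / 2 * padicValNat p i := by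
  have : Fact p.Prime := ⟨hp⟩
  have ha₀ : 0 < a := by omega
  have hb₀ : 0 < b := by omega
  rw [sum_eq_sum_Icc_sum_range_of_add_mul (Nat.mul_pos ha₀ hb₀)
    (fun m t hm => ell_add_mul ha₀ hb₀ hab hm t) (fun m => hfin.mem_toFinset)]
  have hfiber : ∀ r ∈ Icc 1 (a * b), ∑ t ∈ range (i - ell a b r),
      padicValNat p (i - ell a b (r + a * b * t)) + ell a b r * padicValNat p i =
        padicValNat p i ! := by
    intro r hr
    rw [mem_Icc] at hr
    simp_rw [ell_add_mul ha₀ hb₀ hab hr.1, ← Nat.sub_sub]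
    rw [sum_range_padicValNat_sub, padicValNat_factorial_sub_add_mul (ell_le_one ha₀ hab hr.2)]
  refine eq_tsub_of_add_eq ?_
  rw [← sum_ell_Icc ha₀ hab, sum_mul, ← sum_add_distrib, sum_congr rfl hfiber, sum_const,
    Nat.card_Icc, smul_eq_mul, Nat.add_sub_cancel]

theorem sum_padicValNat_sub_ell (a b : ℕ) (ha : 2 ≤ a) (hb : 2 ≤ b)
    (hab : Nat.gcd a b = 1) (p : ℕ) (hp : p.Prime) (i : ℕ) (hi : 1 ≤ i)
    (hfin : {m : ℕ | 1 ≤ m ∧ ell a b m < i}.Finite) :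
    ∑ m ∈ hfin.toFinset, padicValNat p (i - ell a b m) =
      a * b * padicValNat p (Nat.factorial i) -
        (a - 1) * (b - 1) / 2 * padicValNat p i :=
  sum_padicValNat_sub_ell_general a b ha hb hab p hp i hfin
end
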